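/- arXiv:0901.1937 — 9 statements merged into one kernel-verified Lean document; each statement's English description precedes it below -/
import Mathlib

section
/- Let x : ZMod r → ℕ → R be a tube system of rank r over a commutative ring R. Let i, j, k, l, m be integers with 1 ≤ j ≤ i ≤ r, m ≥ 0, 0 ≤ l ≤ r−1, 1 ≤ k ≤ mr+l and k+i ≥ r+j. Then, with the first argument of x taken as a residue modulo r, x i k · x j (mr+l) = x i ((m+1)r+l+j−i) · x j (k+i−r−j) + x i (r+j−i−1) · x (k+i+1) ((m+1)r+l+j−k−i−1). (This is case (1)(1) of Theorem 7.1: X_{E_i[k]} X_{E_j[mr+l]} = X_{E_i[(m+1)r+l+j−i]} X_{E_j[k+i−r−j]} + X_{E_i[r+j−i−1]} X_{E_{k+i+1}[(m+1)r+l+j−k−i−1]}.) -/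
/-- A tube system of rank `r` over a commutative ring `R`: `x i n` models the
generalized cluster variable `X_{E_i[n]}` of the indecomposable regular module
with quasi-socle `E_i` and quasi-length `n` in a tube of rank `r`, with the
convention `X_{E_i[0]} = 1`, together with the cluster multiplication
relations these variables satisfy. -/
def IsTubeSystem {R : Type*} [CommRing R] (r : ℕ) (x : ZMod r → ℕ → R) : Prop :=
  (∀ i, x i 0 = 1) ∧
  (∀ (i : ZMod r) (N : ℕ), 1 ≤ N →
    x (i + (N : ZMod r)) 1 * x i N = x i (N + 1) + x i (N - 1)) ∧
  (∀ (i : ZMod r) (N : ℕ), 1 ≤ N →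
    x (i - 1) 1 * x i N = x (i - 1) (N + 1) + x (i + 1) (N - 1))

/-!
Relation (ii) says that `n ↦ x a n` solves the three-term recurrence
`y (n + 1) = x (a + n) 1 * y n - y (n - 1)`, so the `x a n` are continuants. The theorem is
the Ptolemy relation for the overlapping segments `[a, a + u + s + 1)` and
`[a + u + 1, a + u + s + p + 2)`, whose intersection and the two pieces of their symmetric
difference have lengths `s`, `u` and `p`. For `p = 0` it says that the Casoratian of the two
solutions `n ↦ x a (u + 1 + n)` and `n ↦ x (a + u + 1) n` is constant; as functions of `p`,
both sides solve the same recurrence, with coefficient `x (a + u + s + p + 2) 1`.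
-/

theorem add_natCast_add_natCast {G : Type*} [AddMonoidWithOne G] {a : G} {m n k : ℕ}
    (h : m + n = k) :
    a + (m : G) + (n : G) = a + (k : G) := by
  rw [add_assoc, ← Nat.cast_add, h]

section Ptolemy

variable {G R : Type*} [AddMonoidWithOne G] [CommRing R] {x : G → ℕ → R}

theorem ptolemy_of_recurrence_zero (h0 : ∀ a, x a 0 = 1)
    (hrec : ∀ a (n : ℕ), x (a + (n + 1 : ℕ)) 1 * x a (n + 1) = x a (n + 2) + x a n)
    (a : G) (u n : ℕ) :
    x a (u + n + 1) * x (a + (u + 1 : ℕ)) (n + 1)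
      = x a (u + n + 2) * x (a + (u + 1 : ℕ)) n + x a u := by
  induction n with
  | zero =>
    simp only [add_zero, zero_add, h0, mul_one]
    linear_combination hrec a u
  | succ n ih =>
    have hb := hrec (a + (u + 1 : ℕ)) n
    rw [add_natCast_add_natCast (by omega : u + 1 + (n + 1) = u + n + 1 + 1)] at hb
    have ha := hrec a (u + n + 1)
    linear_combination ih - x a (u + n + 2) * hb + x (a + (u + 1 : ℕ)) (n + 1) * ha

theorem ptolemy_of_recurrence (h0 : ∀ a, x a 0 = 1)
    (hrec : ∀ a (n : ℕ), x (a + (n + 1 : ℕ)) 1 * x a (n + 1) = x a (n + 2) + x a n)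
    (a : G) (u s p : ℕ) :
    x a (u + s + 1) * x (a + (u + 1 : ℕ)) (s + p + 1)
      = x a (u + s + p + 2) * x (a + (u + 1 : ℕ)) s
        + x a u * x (a + (u + s + 2 : ℕ)) p := by
  induction p using Nat.twoStepInduction with
  | zero =>
    simp only [add_zero, h0, mul_one]
    exact ptolemy_of_recurrence_zero h0 hrec a u s
  | one =>
    have hb := hrec (a + (u + 1 : ℕ)) s
    rw [add_natCast_add_natCast (by omega : u + 1 + (s + 1) = u + s + 2)] at hb
    linear_combination x (a + (u + s + 2 : ℕ)) 1 * ptolemy_of_recurrence_zero h0 hrec a u s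
      - x a (u + s + 1) * hb + x (a + (u + 1 : ℕ)) s * hrec a (u + s + 1)
  | more n ih₀ ih₁ =>
    have hb := hrec (a + (u + 1 : ℕ)) (s + n + 1)
    rw [add_natCast_add_natCast (by omega : u + 1 + (s + n + 1 + 1) = u + s + n + 2 + 1)] at hb
    have hc := hrec (a + (u + s + 2 : ℕ)) n
    rw [add_natCast_add_natCast (by omega : u + s + 2 + (n + 1) = u + s + n + 2 + 1)] at hc
    linear_combination x (a + (u + s + n + 2 + 1 : ℕ)) 1 * ih₁ - ih₀
      - x a (u + s + 1) * hb + x (a + (u + 1 : ℕ)) s * hrec a (u + s + n + 2)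
      + x a u * hc

end Ptolemy

theorem IsTubeSystem.recurrence {R : Type*} [CommRing R] {r : ℕ} {x : ZMod r → ℕ → R}
    (hx : IsTubeSystem r x) (a : ZMod r) (n : ℕ) :
    x (a + (n + 1 : ℕ)) 1 * x a (n + 1) = x a (n + 2) + x a n :=
  hx.2.1 a (n + 1) n.succ_pos

theorem tube_multiplication_case_1_1_general {R : Type*} [CommRing R] (r : ℕ)
    (x : ZMod r → ℕ → R) (hx : IsTubeSystem r x)
    (i j k l m : ℕ)
    (hj : 1 ≤ j) (hir : i ≤ r)
    (hk2 : k ≤ m * r + l) (hcase : r + j ≤ k + i) :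
    x (i : ZMod r) k * x (j : ZMod r) (m * r + l)
      = x (i : ZMod r) ((m + 1) * r + l + j - i) * x (j : ZMod r) (k + i - r - j)
        + x (i : ZMod r) (r + j - i - 1)
          * x ((k + i + 1 : ℕ) : ZMod r) ((m + 1) * r + l + j - k - i - 1) := by
  obtain ⟨u, hu⟩ : ∃ u, r + j = i + (u + 1) := ⟨r + j - i - 1, by omega⟩
  obtain ⟨s, rfl⟩ : ∃ s, k = u + s + 1 := ⟨k + i - r - j, by omega⟩
  obtain ⟨p, hp⟩ : ∃ p, m * r + l = s + p + 1 := ⟨m * r + l - s - 1, by omega⟩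
  have hj_cast : ((j : ℕ) : ZMod r) = (i : ZMod r) + (u + 1 : ℕ) := by
    rw [← Nat.cast_add, ← hu, Nat.cast_add, ZMod.natCast_self, zero_add]
  have hk_cast : ((u + s + 1 + i + 1 : ℕ) : ZMod r) = (i : ZMod r) + (u + s + 2 : ℕ) := by
    rw [← Nat.cast_add]; congr 1; omega
  rw [hj_cast, hk_cast, hp, show (m + 1) * r + l + j - i = u + s + p + 2 by rw [add_mul]; omega,
    show u + s + 1 + i - r - j = s by omega, show r + j - i - 1 = u by omega,
    show (m + 1) * r + l + j - (u + s + 1) - i - 1 = p by rw [add_mul]; omega]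
  exact ptolemy_of_recurrence hx.1 hx.recurrence _ u s p

/-- Theorem 7.1, case (1)(1). -/
theorem tube_multiplication_case_1_1 {R : Type*} [CommRing R] (r : ℕ)
    (x : ZMod r → ℕ → R) (hx : IsTubeSystem r x)
    (i j k l m : ℕ)
    (hj : 1 ≤ j) (hji : j ≤ i) (hir : i ≤ r) (hl : l ≤ r - 1)
    (hk1 : 1 ≤ k) (hk2 : k ≤ m * r + l) (hcase : r + j ≤ k + i) :
    x (i : ZMod r) k * x (j : ZMod r) (m * r + l)
      = x (i : ZMod r) ((m + 1) * r + l + j - i) * x (j : ZMod r) (k + i - r - j)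
        + x (i : ZMod r) (r + j - i - 1)
          * x ((k + i + 1 : ℕ) : ZMod r) ((m + 1) * r + l + j - k - i - 1) :=
  tube_multiplication_case_1_1_general r x hx i j k l m hj hir hk2 hcase
end

section
/- Let x : ZMod r → ℕ → R be a tube system of rank r over a commutative ring R. Let i, j, k, l, m be integers with 1 ≤ j ≤ i ≤ r, m ≥ 0, 0 ≤ l ≤ r−1, 1 ≤ k ≤ mr+l, k+i < r+j and i ≤ l+j ≤ k+i−1. Then, with the first argument of x taken as a residue modulo r, x i k · x j (mr+l) = x j (mr+k+i−j) · x i (l+j−i) + x j (mr+i−j−1) · x (l+j+1) (k+i−l−j−1). (This is case (1)(2) of Theorem 7.1: X_{E_i[k]} X_{E_j[mr+l]} = X_{E_j[mr+k+i−j]} X_{E_i[l+j−i]} + X_{E_j[mr+i−j−1]} X_{E_{l+j+1}[k+i−l−j−1]}.) -/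
namespace ThreeTermRec

variable {R : Type*} [CommRing R] (c : ℕ → R)

def IsSol (h : ℕ → R) : Prop :=
  ∀ n, h (n + 2) = c n * h (n + 1) - h n

def sol (u v : R) : ℕ → R
  | 0 => u
  | 1 => v
  | n + 2 => c n * sol u v (n + 1) - sol u v n

def minor (m n : ℕ) : R :=
  sol c 1 0 m * sol c 0 1 n - sol c 0 1 m * sol c 1 0 n

variable {c}

theorem isSol_sol (u v : R) : IsSol c (sol c u v) := fun _ => rfl

namespace IsSol

variable {f g : ℕ → R}

theorem ext (hf : IsSol c f) (hg : IsSol c g) (h0 : f 0 = g 0) (h1 : f 1 = g 1) : f = g := by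
  have consecutive : ∀ n, f n = g n ∧ f (n + 1) = g (n + 1) := by
    intro n
    induction n with
    | zero => exact ⟨h0, h1⟩
    | succ n ih => exact ⟨ih.2, by rw [hf, hg, ih.1, ih.2]⟩
  funext n
  exact (consecutive n).1

theorem shift (hf : IsSol c f) (d : ℕ) : IsSol (fun n => c (n + d)) (fun n => f (n + d)) := by
  intro n
  simpa only [Nat.add_right_comm n 2 d, Nat.add_right_comm n 1 d] using hf (n + d)

theorem casoratian_eq (hf : IsSol c f) (hg : IsSol c g) (n : ℕ) :
    g n * f (n + 1) - f n * g (n + 1) = g 0 * f 1 - f 0 * g 1 := by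
  induction n with
  | zero => rfl
  | succ n ih =>
    rw [hf, hg]
    linear_combination ih

theorem mul_sub_mul (hf : IsSol c f) (hg : IsSol c g) (α β : R) :
    IsSol c (fun n => α * f n - β * g n) := by
  intro n
  simp only [hf n, hg n]
  ring

end IsSol

theorem isSol_minor (m : ℕ) : IsSol c (minor c m) :=
  (isSol_sol 0 1).mul_sub_mul (isSol_sol 1 0) _ _

theorem minor_self (m : ℕ) : minor c m m = 0 := by
  rw [minor]
  ring

theorem minor_succ (m : ℕ) : minor c m (m + 1) = 1 := by
  rw [minor, (isSol_sol 0 1).casoratian_eq (isSol_sol 1 0)]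
  simp [sol]

theorem minor_plucker (a b d e : ℕ) :
    minor c b e * minor c a d = minor c a e * minor c b d + minor c a b * minor c d e := by
  simp only [minor]
  ring

theorem IsSol.eq_minor {m : ℕ} {h : ℕ → R} (hh : IsSol (fun n => c (n + (m + 1))) h)
    (h0 : h 0 = 1) (h1 : h 1 = c m) : h = fun n => minor c m (n + (m + 1)) := by
  refine hh.ext ((isSol_minor m).shift (m + 1)) ?_ ?_
  · simpa [minor_succ] using h0
  · rw [h1, show 1 + (m + 1) = m + 2 by omega, isSol_minor m m, minor_succ, minor_self]
    ring

end ThreeTermRec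

namespace IsTubeSystem

open ThreeTermRec

variable {R : Type*} [CommRing R] {r : ℕ} {x : ZMod r → ℕ → R}

theorem isSol (hx : IsTubeSystem r x) (p : ZMod r) :
    IsSol (fun n => x (p + ((n + 1 : ℕ) : ZMod r)) 1) (x p) := by
  intro n
  have h := hx.2.1 p (n + 1) (by omega)
  rw [Nat.add_sub_cancel] at h
  linear_combination -h

theorem eq_minor (hx : IsTubeSystem r x) (p : ZMod r) {m k n : ℕ} (hn : m + k + 1 = n) :
    x (p + m) k = minor (fun n => x (p + n) 1) m n := by
  have coeff : (fun n => x (p + m + ((n + 1 : ℕ) : ZMod r)) 1)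
      = fun n => x (p + ((n + (m + 1) : ℕ) : ZMod r)) 1 := by
    funext n
    push_cast
    ring_nf
  have hsol := hx.isSol (p + m)
  rw [coeff] at hsol
  rw [IsSol.eq_minor (c := fun n => x (p + n) 1) hsol (hx.1 _) rfl, ← hn]
  ring_nf

end IsTubeSystem

theorem tube_multiplication_case_1_2_general {R : Type*} [CommRing R] (r : ℕ)
    (x : ZMod r → ℕ → R) (hx : IsTubeSystem r x)
    (i j k l m : ℕ)
    (hj : 1 ≤ j) (hji : j ≤ i) (hir : i ≤ r)
    (hk2 : k ≤ m * r + l)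
    (hlj1 : i ≤ l + j) (hlj2 : l + j ≤ k + i - 1) :
    x (i : ZMod r) k * x (j : ZMod r) (m * r + l)
      = x (j : ZMod r) (m * r + k + i - j) * x (i : ZMod r) (l + j - i)
        + x (j : ZMod r) (m * r + i - j - 1)
          * x ((l + j + 1 : ℕ) : ZMod r) (k + i - l - j - 1) := by
  have hpos : 1 ≤ m * r + i - j := by
    rcases Nat.eq_zero_or_pos m with rfl | hm
    · omega
    · have := Nat.le_mul_of_pos_left r hm
      omega
  have hi : (i : ZMod r) = j + ((m * r + i - j : ℕ) : ZMod r) := by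
    rw [Nat.add_sub_assoc hji]
    push_cast [Nat.cast_sub hji, ZMod.natCast_self]
    ring
  have hlj : ((l + j + 1 : ℕ) : ZMod r) = j + ((m * r + l + 1 : ℕ) : ZMod r) := by
    push_cast [ZMod.natCast_self]
    ring
  have hj0 : (j : ZMod r) = j + ((0 : ℕ) : ZMod r) := by simp
  have x_eq {p : ZMod r} {m' k' n : ℕ} (hp : p = j + (m' : ZMod r)) (hn : m' + k' + 1 = n) :
      x p k' = ThreeTermRec.minor (fun n => x (j + n) 1) m' n := by
    rw [hp]
    exact hx.eq_minor j hn
  rw [x_eq hi (n := m * r + k + i - j + 1) (by omega), x_eq hj0 (n := m * r + l + 1) (by omega),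
    x_eq hj0 (n := m * r + k + i - j + 1) (by omega), x_eq hi (n := m * r + l + 1) (by omega),
    x_eq hj0 (n := m * r + i - j) (by omega), x_eq hlj (n := m * r + k + i - j + 1) (by omega)]
  exact ThreeTermRec.minor_plucker _ _ _ _

/-- Theorem 7.1, case (1)(2). -/
theorem tube_multiplication_case_1_2 {R : Type*} [CommRing R] (r : ℕ)
    (x : ZMod r → ℕ → R) (hx : IsTubeSystem r x)
    (i j k l m : ℕ)
    (hj : 1 ≤ j) (hji : j ≤ i) (hir : i ≤ r) (hl : l ≤ r - 1)
    (hk1 : 1 ≤ k) (hk2 : k ≤ m * r + l)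
    (hcase : k + i < r + j) (hlj1 : i ≤ l + j) (hlj2 : l + j ≤ k + i - 1) :
    x (i : ZMod r) k * x (j : ZMod r) (m * r + l)
      = x (j : ZMod r) (m * r + k + i - j) * x (i : ZMod r) (l + j - i)
        + x (j : ZMod r) (m * r + i - j - 1)
          * x ((l + j + 1 : ℕ) : ZMod r) (k + i - l - j - 1) :=
  tube_multiplication_case_1_2_general r x hx i j k l m hj hji hir hk2 hlj1 hlj2
end

section
/- Let x : ZMod r → ℕ → R be a tube system of rank r over a commutative ring R. Let i, j, k, l, m be integers with 1 ≤ i < j ≤ r, m ≥ 0, 0 ≤ l ≤ r−1, 1 ≤ k ≤ mr+l and k ≥ j−i. Then, with the first argument of x taken as a residue modulo r, x i k · x j (mr+l) = x i (j−i−1) · x (k+i+1) (mr+l+j−k−i−1) + x i (mr+l+j−i) · x j (k+i−j). (This is case (2)(1) of Theorem 7.1: X_{E_i[k]} X_{E_j[mr+l]} = X_{E_i[j−i−1]} X_{E_{k+i+1}[mr+l+j−k−i−1]} + X_{E_i[mr+l+j−i]} X_{E_j[k+i−j]}.) -/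
/-!
Extend `x` by zero to negative quasi-lengths. Then the relations (ii) and (iii) hold for
every `N ≥ 0`, and one proves, for `s ≤ k ≤ n` and every `a`,
`X_a[k] X_{a+s}[n] = X_a[s-1] X_{a+k+1}[n+s-k-1] + X_a[n+s] X_{a+s}[k-s]`,
by induction on `s` in steps of two; the base case `s = 1` is itself an induction on `k`.
Each inductive step is an explicit linear combination of earlier cases and of (ii), (iii).
The theorem is the case `a = i`, `s = j - i`, `n = mr + l`.
-/

section

variable {R : Type*} [CommRing R] {r : ℕ} {x : ZMod r → ℕ → R}

def tubeExt (x : ZMod r → ℕ → R) (i : ZMod r) (n : ℤ) : R :=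
  if 0 ≤ n then x i n.toNat else 0

@[simp]
lemma tubeExt_natCast (i : ZMod r) (n : ℕ) : tubeExt x i n = x i n := by
  simp [tubeExt]

lemma tubeExt_of_neg (i : ZMod r) {n : ℤ} (h : n < 0) : tubeExt x i n = 0 := by
  simp [tubeExt, not_le.mpr h]

@[simp]
lemma tubeExt_neg_one (i : ZMod r) : tubeExt x i (-1) = 0 :=
  tubeExt_of_neg i (by norm_num)

namespace IsTubeSystem

lemma tubeExt_zero (hx : IsTubeSystem r x) (i : ZMod r) : tubeExt x i 0 = 1 := by
  simpa [tubeExt] using hx.1 i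

lemma tubeExt_mul_top (hx : IsTubeSystem r x) (i : ZMod r) {N : ℤ} (hN : 0 ≤ N) :
    tubeExt x (i + N) 1 * tubeExt x i N = tubeExt x i (N + 1) + tubeExt x i (N - 1) := by
  lift N to ℕ using hN
  rcases Nat.eq_zero_or_pos N with rfl | hN
  · simp [hx.tubeExt_zero]
  · have h := hx.2.1 i N hN
    rw [show (N : ℤ) - 1 = ((N - 1 : ℕ) : ℤ) by omega]
    exact_mod_cast h

lemma tubeExt_mul_socle (hx : IsTubeSystem r x) (i : ZMod r) {N : ℤ} (hN : 0 ≤ N) :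
    tubeExt x (i - 1) 1 * tubeExt x i N
      = tubeExt x (i - 1) (N + 1) + tubeExt x (i + 1) (N - 1) := by
  lift N to ℕ using hN
  rcases Nat.eq_zero_or_pos N with rfl | hN
  · simp [hx.tubeExt_zero]
  · have h := hx.2.2 i N hN
    rw [show (N : ℤ) - 1 = ((N - 1 : ℕ) : ℤ) by omega]
    exact_mod_cast h

lemma tubeExt_mul_shift_one (hx : IsTubeSystem r x) (a : ZMod r) {k n : ℕ} (hkn : k ≤ n) :
    tubeExt x a k * tubeExt x (a + 1) n
      = tubeExt x (a + k + 1) (n - k) + tubeExt x a (n + 1) * tubeExt x (a + 1) (k - 1) := by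
  induction k using Nat.strong_induction_on with
  | _ k ih =>
  match k with
  | 0 => simp [hx.tubeExt_zero]
  | 1 =>
    have h := hx.tubeExt_mul_socle (a + 1) (N := n) (by positivity)
    simp only [add_sub_cancel_right] at h
    simp only [Nat.cast_one, sub_self, hx.tubeExt_zero]
    linear_combination h
  | k + 2 =>
    have h1 := hx.tubeExt_mul_top a (N := k + 1) (by positivity)
    have h2 := ih (k + 1) (by omega) (by omega)
    have h3 := ih k (by omega) (by omega)
    have h4 := hx.tubeExt_mul_socle (a + k + 2) (N := n - k - 1) (by omega)
    have h5 := hx.tubeExt_mul_top (a + 1) (N := k) (by positivity)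
    push_cast at h1 h2 h3 h4 h5 ⊢
    ring_nf at h1 h2 h3 h4 h5 ⊢
    linear_combination -tubeExt x (1 + a) n * h1 + tubeExt x (1 + a + k) 1 * h2 - h3 + h4
      + tubeExt x a (1 + n) * h5

lemma tubeExt_mul_shift (hx : IsTubeSystem r x) (a : ZMod r) {s k n : ℕ}
    (hsk : s ≤ k) (hkn : k ≤ n) :
    tubeExt x a k * tubeExt x (a + s) n
      = tubeExt x a (s - 1) * tubeExt x (a + k + 1) (n + s - k - 1)
        + tubeExt x a (n + s) * tubeExt x (a + s) (k - s) := by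
  induction s using Nat.strong_induction_on generalizing n with
  | _ s ih =>
  match s with
  | 0 => simp [mul_comm]
  | 1 =>
    have h := hx.tubeExt_mul_shift_one a hkn
    simp only [Nat.cast_one, sub_self, hx.tubeExt_zero]
    rw [show (n : ℤ) + 1 - k - 1 = n - k by ring]
    linear_combination h
  | s + 2 =>
    have h1 := ih (s + 1) (by omega) (by omega) (n := n + 1) (by omega)
    have h2 := ih s (by omega) (by omega) (n := n + 2) (by omega)
    have h3 := hx.tubeExt_mul_socle (a + s + 1) (N := n + 1) (by positivity)
    have h4 := hx.tubeExt_mul_top a (N := s) (by positivity)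
    have h5 := hx.tubeExt_mul_socle (a + s + 1) (N := k - s - 1) (by omega)
    push_cast at h1 h2 h3 h4 h5 ⊢
    ring_nf at h1 h2 h3 h4 h5 ⊢
    linear_combination -tubeExt x a k * h3 + tubeExt x (a + s) 1 * h1 - h2
      + tubeExt x (1 + a + k) (1 + n + s - k) * h4 + tubeExt x a (2 + n + s) * h5

end IsTubeSystem

end

theorem tube_multiplication_case_2_1_general {R : Type*} [CommRing R] (r : ℕ)
    (x : ZMod r → ℕ → R) (hx : IsTubeSystem r x)
    (i j k l m : ℕ)
    (hij : i < j)
    (hk2 : k ≤ m * r + l) (hcase : j - i ≤ k) :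
    x (i : ZMod r) k * x (j : ZMod r) (m * r + l)
      = x (i : ZMod r) (j - i - 1)
          * x ((k + i + 1 : ℕ) : ZMod r) (m * r + l + j - k - i - 1)
        + x (i : ZMod r) (m * r + l + j - i) * x (j : ZMod r) (k + i - j) := by
  have h := hx.tubeExt_mul_shift (i : ZMod r) hcase hk2
  have hj : (i : ZMod r) + ((j - i : ℕ) : ZMod r) = j := by
    rw [← Nat.cast_add, Nat.add_sub_cancel' hij.le]
  have hk : (i : ZMod r) + k + 1 = ((k + i + 1 : ℕ) : ZMod r) := by
    push_cast; ring
  rw [hj, hk, show ((j - i : ℕ) : ℤ) - 1 = ((j - i - 1 : ℕ) : ℤ) by omega,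
    show ((m * r + l : ℕ) : ℤ) + (j - i : ℕ) - k - 1 = ((m * r + l + j - k - i - 1 : ℕ) : ℤ) by
      omega,
    show ((m * r + l : ℕ) : ℤ) + (j - i : ℕ) = ((m * r + l + j - i : ℕ) : ℤ) by omega,
    show (k : ℤ) - (j - i : ℕ) = ((k + i - j : ℕ) : ℤ) by omega] at h
  simpa only [tubeExt_natCast] using h

/-- Theorem 7.1, case (2)(1). -/
theorem tube_multiplication_case_2_1 {R : Type*} [CommRing R] (r : ℕ)
    (x : ZMod r → ℕ → R) (hx : IsTubeSystem r x)
    (i j k l m : ℕ)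
    (hi : 1 ≤ i) (hij : i < j) (hjr : j ≤ r) (hl : l ≤ r - 1)
    (hk1 : 1 ≤ k) (hk2 : k ≤ m * r + l) (hcase : j - i ≤ k) :
    x (i : ZMod r) k * x (j : ZMod r) (m * r + l)
      = x (i : ZMod r) (j - i - 1)
          * x ((k + i + 1 : ℕ) : ZMod r) (m * r + l + j - k - i - 1)
        + x (i : ZMod r) (m * r + l + j - i) * x (j : ZMod r) (k + i - j) :=
  tube_multiplication_case_2_1_general r x hx i j k l m hij hk2 hcase
end

section
/- Let x : ZMod r → ℕ → R be a tube system of rank r over a commutative ring R. Let i, j, k, l, m be integers with 1 ≤ i < j ≤ r, m ≥ 0, 0 ≤ l ≤ r−1, 1 ≤ k ≤ mr+l, k < j−i and i ≤ l+j−r ≤ k+i−1. Then, with the first argument of x taken as a residue modulo r, x i k · x j (mr+l) = x j ((m+1)r+k+i−j) · x i (l+j−r−i) + x j ((m+1)r+i−j−1) · x (l+j+1) (k+r+i−l−j−1). (This is case (2)(2) of Theorem 7.1: X_{E_i[k]} X_{E_j[mr+l]} = X_{E_j[(m+1)r+k+i−j]} X_{E_i[l+j−r−i]} + X_{E_j[(m+1)r+i−j−1]}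 X_{E_{l+j+1}[k+r+i−l−j−1]}.) -/
open Function

section ThreeTermSeq

variable {R M N : Type*} [CommRing R] [AddCommGroup M] [Module R M] [AddCommGroup N] [Module R N]

def threeTermSeq (f : ℕ → R) (u₀ u₁ : M) : ℕ → M
  | 0 => u₀
  | 1 => u₁
  | n + 2 => f (n + 1) • threeTermSeq f u₀ u₁ (n + 1) - threeTermSeq f u₀ u₁ n

variable (f : ℕ → R) (u₀ u₁ : M)

@[simp] lemma threeTermSeq_zero : threeTermSeq f u₀ u₁ 0 = u₀ := rfl

@[simp] lemma threeTermSeq_one : threeTermSeq f u₀ u₁ 1 = u₁ := rfl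

lemma threeTermSeq_add_two (n : ℕ) :
    threeTermSeq f u₀ u₁ (n + 2) =
      f (n + 1) • threeTermSeq f u₀ u₁ (n + 1) - threeTermSeq f u₀ u₁ n := rfl

lemma eq_threeTermSeq {f : ℕ → R} {w : ℕ → M}
    (hw : ∀ n, w (n + 2) = f (n + 1) • w (n + 1) - w n) :
    w = threeTermSeq f (w 0) (w 1) := by
  funext n
  induction n using Nat.twoStepInduction with
  | zero => rfl
  | one => rfl
  | more n ih₀ ih₁ => rw [hw, threeTermSeq_add_two, ← ih₀, ← ih₁]

lemma threeTermSeq_add (s n : ℕ) :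
    threeTermSeq f u₀ u₁ (n + s) =
      threeTermSeq (fun m ↦ f (m + s)) (threeTermSeq f u₀ u₁ s)
        (threeTermSeq f u₀ u₁ (s + 1)) n := by
  have h := eq_threeTermSeq (f := fun m ↦ f (m + s))
    (w := fun n ↦ threeTermSeq f u₀ u₁ (n + s))
    fun n ↦ by
      simp only [Nat.add_right_comm n 2 s, Nat.add_right_comm n 1 s, threeTermSeq_add_two]
  simpa [Nat.add_comm 1 s] using congrFun h n

lemma map_threeTermSeq (L : M →ₗ[R] N) (n : ℕ) :
    L (threeTermSeq f u₀ u₁ n) = threeTermSeq f (L u₀) (L u₁) n := by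
  have h := eq_threeTermSeq (f := f) (w := fun n ↦ L (threeTermSeq f u₀ u₁ n))
    fun n ↦ by simp only [threeTermSeq_add_two, map_sub, map_smul]
  simpa using congrFun h n

end ThreeTermSeq

section Wedge

variable {R : Type*} [CommRing R]

def wedge (p : R × R) : R × R →ₗ[R] R :=
  p.1 • LinearMap.snd R R R - p.2 • LinearMap.fst R R R

@[simp] lemma wedge_apply (p q : R × R) : wedge p q = p.1 * q.2 - p.2 * q.1 := by
  simp [wedge]

/-- The Plücker relation, with one factor of each term replaced by an arbitrary linear form. -/
lemma wedge_mul_apply (φ : R × R →ₗ[R] R) (p q s : R × R) :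
    wedge p q * φ s = wedge s q * φ p + wedge p s * φ q := by
  have hφ : ∀ z : R × R, φ z = z.1 * φ (1, 0) + z.2 * φ (0, 1) := fun z ↦ by
    conv_lhs => rw [show z = z.1 • ((1 : R), (0 : R)) + z.2 • ((0 : R), (1 : R)) by
      ext <;> simp]
    rw [map_add, map_smul, map_smul, smul_eq_mul, smul_eq_mul]
  rw [hφ p, hφ q, hφ s]
  simp only [wedge_apply]
  ring

end Wedge

section FundamentalSeq

variable {R : Type*} [CommRing R] (f : ℕ → R)

abbrev fundamentalSeq : ℕ → R × R := threeTermSeq f (1, 0) (0, 1)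

lemma wedge_fundamentalSeq_succ (n : ℕ) :
    wedge (fundamentalSeq f n) (fundamentalSeq f (n + 1)) = 1 := by
  induction n with
  | zero => simp
  | succ n ih =>
    rw [← ih]
    unfold fundamentalSeq
    rw [threeTermSeq_add_two]
    simp only [wedge_apply, Prod.smul_fst, Prod.smul_snd, Prod.fst_sub, Prod.snd_sub, smul_eq_mul]
    ring

lemma wedge_fundamentalSeq_add (p n : ℕ) :
    wedge (fundamentalSeq f p) (fundamentalSeq f (n + (p + 1))) =
      threeTermSeq (fun m ↦ f (m + (p + 1))) 1 (f (p + 1)) n := by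
  have h₂ : wedge (fundamentalSeq f p) (fundamentalSeq f (p + 2)) = f (p + 1) := by
    rw [fundamentalSeq, threeTermSeq_add_two, map_sub, map_smul, ← fundamentalSeq,
      wedge_fundamentalSeq_succ]
    simp [mul_comm]
  rw [fundamentalSeq, threeTermSeq_add, ← fundamentalSeq, map_threeTermSeq,
    wedge_fundamentalSeq_succ, h₂]

lemma exists_fundamentalSeq_add_eq_of_periodic {S : ℕ} (hf : Periodic f S) :
    ∃ L : R × R →ₗ[R] R × R, ∀ n, fundamentalSeq f (n + S) = L (fundamentalSeq f n) := by
  refine ⟨(LinearMap.fst R R R).smulRight (fundamentalSeq f S) +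
    (LinearMap.snd R R R).smulRight (fundamentalSeq f (S + 1)), fun n ↦ ?_⟩
  rw [fundamentalSeq, threeTermSeq_add, map_threeTermSeq,
    show (fun m ↦ f (m + S)) = f from funext hf]
  simp

lemma wedge_fundamentalSeq_exchange {S : ℕ} (hf : Periodic f S) (b p q s : ℕ) :
    let v := fundamentalSeq f
    wedge (v p) (v q) * wedge (v b) (v (s + S)) =
      wedge (v b) (v (q + S)) * wedge (v p) (v s) +
        wedge (v b) (v (p + S)) * wedge (v s) (v q) := by
  obtain ⟨L, hL⟩ := exists_fundamentalSeq_add_eq_of_periodic f hf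
  simp only [hL]
  have h := wedge_mul_apply ((wedge (fundamentalSeq f b)).comp L)
    (fundamentalSeq f p) (fundamentalSeq f q) (fundamentalSeq f s)
  simp only [LinearMap.comp_apply] at h
  rw [h]
  ring

end FundamentalSeq

namespace IsTubeSystem

variable {R : Type*} [CommRing R] {r : ℕ} {x : ZMod r → ℕ → R}

lemma eq_threeTermSeq (hx : IsTubeSystem r x) (t : ZMod r) :
    x t = threeTermSeq (fun m ↦ x (t + m) 1) 1 (x t 1) := by
  conv_rhs => rw [← hx.1 t]
  refine _root_.eq_threeTermSeq fun n ↦ ?_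
  have h := hx.2.1 t (n + 1) n.succ_pos
  rw [Nat.add_sub_cancel] at h
  rw [smul_eq_mul, h]
  ring

lemma apply_eq_wedge (hx : IsTubeSystem r x) (t₀ : ZMod r) (p n : ℕ) :
    x (t₀ + (p + 1 : ℕ)) n =
      wedge (fundamentalSeq (fun m ↦ x (t₀ + m) 1) p)
        (fundamentalSeq (fun m ↦ x (t₀ + m) 1) (n + (p + 1))) := by
  rw [wedge_fundamentalSeq_add, hx.eq_threeTermSeq]
  congr 2 with m
  push_cast
  ring_nf

end IsTubeSystem

theorem tube_multiplication_case_2_2_general {R : Type*} [CommRing R] (r : ℕ)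
    (x : ZMod r → ℕ → R) (hx : IsTubeSystem r x)
    (i j k l m : ℕ)
    (hi : 1 ≤ i) (hij : i < j) (hjr : j ≤ r)
    (hlj1 : i ≤ l + j - r) (hlj2 : l + j - r ≤ k + i - 1) :
    x (i : ZMod r) k * x (j : ZMod r) (m * r + l)
      = x (j : ZMod r) ((m + 1) * r + k + i - j) * x (i : ZMod r) (l + j - r - i)
        + x (j : ZMod r) ((m + 1) * r + i - j - 1)
          * x ((l + j + 1 : ℕ) : ZMod r) (k + r + i - l - j - 1) := by
  set t₀ : ZMod r := (i : ZMod r) - 1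
  have hper : Periodic (fun m : ℕ ↦ x (t₀ + m) 1) ((m + 1) * r) :=
    Periodic.nat_mul (fun n ↦ by simp) _
  rw [add_one_mul] at hper ⊢
  have hwedge (t : ZMod r) (p n q : ℕ) (ht : t = t₀ + (p + 1 : ℕ)) (hq : q = n + (p + 1)) :=
    ht ▸ hq ▸ hx.apply_eq_wedge t₀ p n
  -- The base point `t₀ = i - 1` puts `i + p` at index `p`; and `l + j + 1 ≡ i + (g + 1)`.
  obtain ⟨g, hg⟩ : ∃ g, l + j = r + i + g := ⟨l + j - r - i, by omega⟩
  rw [hwedge i 0 k (k + 1) (by simp [t₀]) (by omega),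
    hwedge j (j - i) (m * r + l) (g + 1 + (m * r + r)) ?cj (by omega),
    hwedge j (j - i) (m * r + r + k + i - j) (k + 1 + (m * r + r)) ?cj (by omega),
    hwedge i 0 (l + j - r - i) (g + 1) (by simp [t₀]) (by omega),
    hwedge j (j - i) (m * r + r + i - j - 1) (0 + (m * r + r)) ?cj (by omega),
    hwedge _ (g + 1) (k + r + i - l - j - 1) (k + 1) ?_ (by omega)]
  · exact wedge_fundamentalSeq_exchange _ hper _ _ _ _
  · rw [hg]; push_cast [t₀, ZMod.natCast_self]; ring
  case cj => rw [Nat.cast_add, Nat.cast_sub hij.le]; ring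

/-- Theorem 7.1, case (2)(2). -/
theorem tube_multiplication_case_2_2 {R : Type*} [CommRing R] (r : ℕ)
    (x : ZMod r → ℕ → R) (hx : IsTubeSystem r x)
    (i j k l m : ℕ)
    (hi : 1 ≤ i) (hij : i < j) (hjr : j ≤ r) (hl : l ≤ r - 1)
    (hk1 : 1 ≤ k) (hk2 : k ≤ m * r + l)
    (hcase : k < j - i) (hlj1 : i ≤ l + j - r) (hlj2 : l + j - r ≤ k + i - 1) :
    x (i : ZMod r) k * x (j : ZMod r) (m * r + l)
      = x (j : ZMod r) ((m + 1) * r + k + i - j) * x (i : ZMod r) (l + j - r - i)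
        + x (j : ZMod r) ((m + 1) * r + i - j - 1)
          * x ((l + j + 1 : ℕ) : ZMod r) (k + r + i - l - j - 1) :=
  tube_multiplication_case_2_2_general r x hx i j k l m hi hij hjr hlj1 hlj2
end

section
/- Let x : ZMod 3 → ℕ → R be a tube system of rank 3 over a commutative ring R, and let m ≥ 0 and n ≥ 3m+1 be integers. Then x 2 (3m+1) · x 1 n = ∑_{t=0}^{2m} c_t, where c_t = x 2 1 · x 1 (n+3m−3t) if t is even and c_t = x 1 (n+3m−3t) if t is odd. (This is Proposition 7.2(1): X_{E_2[3m+1]} X_{E_1[n]} = X_{E_2} X_{E_1[n+3m]} + X_{E_1[n+3m−3]} + X_{E_2} X_{E_1[n+3m−6]} + X_{E_1[n+3m−9]} + ⋯ + X_{E_2} X_{E_1[n−3m+6]} + X_{E_1[n−3m+3]} + X_{E_2} X_{E_1[n−3m]}.) -/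
open Finset

section

variable {R : Type*} [CommRing R]

/-- The trace of `!![a 0, -1; 1, 0] * !![a 1, -1; 1, 0] * !![a 2, -1; 1, 0]`. -/
def monodromyTrace (a : ZMod 3 → R) : R :=
  a 0 * a 1 * a 2 - a 0 - a 1 - a 2

theorem monodromyTrace_rotate (a : ZMod 3 → R) (c : ZMod 3) :
    a (c + 1) * a (c + 2) * a c - a (c + 1) - a (c + 2) - a c = monodromyTrace a := by
  rw [monodromyTrace]
  have hc : c = 0 ∨ c = 1 ∨ c = 2 := by revert c; decide
  rcases hc with rfl | rfl | rfl <;> reduce_mod_char <;> ring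

theorem add_six_add_eq_monodromyTrace_mul {a : ZMod 3 → R} {u : ℕ → R} (j : ZMod 3)
    (hu : ∀ k : ℕ, a (j + k + 1) * u (k + 1) = u (k + 2) + u k) (k : ℕ) :
    u (k + 6) + u k = monodromyTrace a * u (k + 3) := by
  set c : ZMod 3 := j + k
  have h3 : (3 : ZMod 3) = 0 := rfl
  have e0 : a (c + 1) * u (k + 1) = u (k + 2) + u k := hu k
  have e1 : a (c + 2) * u (k + 2) = u (k + 3) + u (k + 1) := by
    convert hu (k + 1) using 3; push_cast; ring
  have e2 : a c * u (k + 3) = u (k + 4) + u (k + 2) := by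
    convert hu (k + 2) using 3; push_cast; linear_combination -h3
  have e3 : a (c + 1) * u (k + 4) = u (k + 5) + u (k + 3) := by
    convert hu (k + 3) using 3; push_cast; linear_combination -h3
  have e4 : a (c + 2) * u (k + 5) = u (k + 6) + u (k + 4) := by
    convert hu (k + 4) using 3; push_cast; linear_combination -h3
  linear_combination -e0 - a (c + 1) * e1 - (a (c + 1) * a (c + 2) - 1) * e2 - a (c + 2) * e3
    - e4 + u (k + 3) * monodromyTrace_rotate a c

def stridedSum (c u : ℕ → R) (d m n : ℕ) : R :=
  ∑ t ∈ range (2 * m + 1), c t * u (n + d * t)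

theorem stridedSum_add_two {c u : ℕ → R} {d : ℕ} {T : R} (hc : Function.Periodic c 2)
    (hu : ∀ k, u (k + 2 * d) + u k = T * u (k + d)) (m n : ℕ) :
    stridedSum c u d (m + 2) n
      = T * stridedSum c u d (m + 1) (n + d) - stridedSum c u d m (n + 2 * d) := by
  have hsplit : T * stridedSum c u d (m + 1) (n + d)
      = ∑ t ∈ range (2 * m + 3), c t * u (n + d * t)
        + ∑ t ∈ range (2 * m + 3), c t * u (n + 2 * d + d * t) := by
    rw [stridedSum, mul_sum, ← sum_add_distrib]
    refine sum_congr rfl fun t _ => ?_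
    rw [show n + d + d * t = n + d * t + d by ring, mul_left_comm, ← hu,
      show n + 2 * d + d * t = n + d * t + 2 * d by ring]
    ring
  rw [hsplit, stridedSum, stridedSum]
  simp only [show 2 * (m + 2) + 1 = 2 * m + 3 + 1 + 1 by ring,
    show 2 * m + 3 = 2 * m + 1 + 1 + 1 by ring, sum_range_succ]
  rw [hc (2 * m + 1), hc (2 * m + 1 + 1)]
  ring_nf

namespace IsTubeSystem

theorem mul_succ {r : ℕ} {x : ZMod r → ℕ → R} (hx : IsTubeSystem r x)
    (i : ZMod r) (k : ℕ) : x (i + k + 1) 1 * x i (k + 1) = x i (k + 2) + x i k := by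
  simpa [add_assoc] using hx.2.1 i (k + 1) k.succ_pos

variable {x : ZMod 3 → ℕ → R}

theorem add_six_add_eq_monodromyTrace_mul (hx : IsTubeSystem 3 x) (i : ZMod 3) (k : ℕ) :
    x i (k + 6) + x i k = monodromyTrace (x · 1) * x i (k + 3) :=
  _root_.add_six_add_eq_monodromyTrace_mul i (hx.mul_succ i) k

theorem apply_two_four (hx : IsTubeSystem 3 x) : x 2 4 = x 2 1 * monodromyTrace (x · 1) + 1 := by
  have e1 := hx.mul_succ 2 0
  have e2 := hx.mul_succ 2 1
  have e3 := hx.mul_succ 2 2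
  norm_num at e1 e2 e3
  reduce_mod_char at e1 e2 e3
  rw [monodromyTrace]
  linear_combination -e3 - x 2 1 * e2 - (x 2 1 * x 1 1 - 1) * e1 + (1 - x 2 1 * x 1 1) * hx.1 2

theorem mul_eq_stridedSum (hx : IsTubeSystem 3 x) (m p : ℕ) :
    x 2 (3 * m + 1) * x 1 (3 * m + p)
      = stridedSum (fun t => if Even t then x 2 1 else 1) (x 1) 3 m p := by
  induction m using Nat.twoStepInduction generalizing p with
  | zero => simp [stridedSum]
  | one =>
    rw [show 3 * 1 + p = p + 3 by ring]
    simp only [stridedSum, hx.apply_two_four, sum_range_succ, range_one, sum_singleton,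
      Nat.reduceMul, Nat.reduceAdd, Even.zero, Nat.not_even_one, even_two, ↓reduceIte,
      mul_zero, add_zero, mul_one, one_mul]
    linear_combination -x 2 1 * hx.add_six_add_eq_monodromyTrace_mul 1 p
  | more m ih₀ ih₁ =>
    have hc : Function.Periodic (fun t => if Even t then x 2 1 else 1) 2 := fun t => by
      simp [Nat.even_add]
    rw [stridedSum_add_two hc (hx.add_six_add_eq_monodromyTrace_mul 1) m p, ← ih₁, ← ih₀,
      show 3 * (m + 1) + 1 = 3 * m + 1 + 3 by ring, show 3 * (m + 2) + 1 = 3 * m + 1 + 6 by ring,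
      show 3 * (m + 2) + p = 3 * (m + 1) + (p + 3) by ring,
      show 3 * m + (p + 2 * 3) = 3 * (m + 1) + (p + 3) by ring]
    linear_combination
      x 1 (3 * (m + 1) + (p + 3)) * hx.add_six_add_eq_monodromyTrace_mul 2 (3 * m + 1)

end IsTubeSystem

end

/-- Proposition 7.2(1). -/
theorem tube_rank_three_prop_7_2_1 {R : Type*} [CommRing R]
    (x : ZMod 3 → ℕ → R) (hx : IsTubeSystem 3 x)
    (m n : ℕ) (hn : 3 * m + 1 ≤ n) :
    x 2 (3 * m + 1) * x 1 n
      = ∑ t ∈ Finset.range (2 * m + 1),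
          if Even t then x 2 1 * x 1 (n + 3 * m - 3 * t)
          else x 1 (n + 3 * m - 3 * t) := by
  obtain ⟨p, rfl⟩ : ∃ p, n = 3 * m + p := ⟨n - 3 * m, by omega⟩
  rw [hx.mul_eq_stridedSum, stridedSum, ← sum_range_reflect]
  refine sum_congr rfl fun t ht => ?_
  have ht : t ≤ 2 * m := by simpa [Nat.lt_succ_iff] using ht
  have hparity : Even (2 * m + 1 - 1 - t) ↔ Even t := by
    rw [show 2 * m + 1 - 1 - t = 2 * m - t by omega, Nat.even_sub ht]
    simp
  rw [show p + 3 * (2 * m + 1 - 1 - t) = 3 * m + p + 3 * m - 3 * t by omega]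
  simp only [hparity, ite_mul, one_mul]
end

section
/- Let x : ZMod 3 → ℕ → R be a tube system of rank 3 over a commutative ring R, and let m ≥ 0 and n ≥ 3m+2 be integers. Then x 2 (3m+2) · x 1 n = ∑_{t=0}^{2m+1} d_t, where d_t = x 2 (n+3m+2−3t) if t is even and d_t = x 2 1 · x 2 (n+3m+2−3t) if t is odd. (This is Proposition 7.2(2): X_{E_2[3m+2]} X_{E_1[n]} = X_{E_2[n+3m+2]} + X_{E_2} X_{E_2[n+3m−1]} + X_{E_2[n+3m−4]} + X_{E_2} X_{E_2[n+3m−7]} + ⋯ + X_{E_2[n−3m+2]} + X_{E_2} X_{E_2[n−3m−1]}.) -/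
/-!
Put `Z = x₀x₁x₂ - x₀ - x₁ - x₂` with `xⱼ = x j 1`. The coefficient of recursion (ii) is
3-periodic in `N`, and the transfer matrix of (ii) over one period has determinant `1` and trace
`Z`, so by Cayley–Hamilton `Z · x i (K + 3) = x i (K + 6) + x i K`. Hence `x 2 (3m + 2)` is
`S_m(Z) · x 2 2`, with `S_m` the rescaled Chebyshev polynomials of the second kind. Relations (ii)
and (iii) give `x 2 2 · x 1 (n + 1) = w n` for `w K = x 2 (K + 3) + x 2 1 · x 2 K`; the sequence
`k ↦ w (K + 3k)` satisfies the same recursion, and for such sequences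
`S_m(Z) · y m = y 0 + y 2 + ⋯ + y (2m)`.
-/

open Polynomial.Chebyshev Finset

theorem Finset.sum_range_two_mul {M : Type*} [AddCommMonoid M] (f : ℕ → M) (m : ℕ) :
    ∑ t ∈ range (2 * m), f t = ∑ s ∈ range m, (f (2 * s) + f (2 * s + 1)) := by
  induction m with
  | zero => simp
  | succ m ih => rw [mul_add_one, sum_range_succ, sum_range_succ, sum_range_succ, ih, add_assoc]

section

variable {R : Type*} [CommRing R]

namespace Polynomial.Chebyshev

theorem S_eval_natCast_add_two (z : R) (m : ℕ) :
    (S R (m + 2 : ℕ)).eval z = z * (S R (m + 1 : ℕ)).eval z - (S R m).eval z := by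
  push_cast
  simp [S_add_two]

theorem eq_S_eval_mul_of_recurrence {z : R} {u : ℕ → R} (h₀ : z * u 0 = u 1)
    (hu : ∀ k, z * u (k + 1) = u (k + 2) + u k) (m : ℕ) : u m = (S R m).eval z * u 0 := by
  induction m using Nat.twoStepInduction with
  | zero => simp
  | one => simp [h₀]
  | more m ih₀ ih₁ =>
    rw [S_eval_natCast_add_two, sub_mul, mul_assoc, ← ih₁, ← ih₀, hu]
    ring

theorem S_eval_mul_eq_sum_of_recurrence {z : R} {y : ℕ → R}
    (hy : ∀ k, z * y (k + 1) = y (k + 2) + y k) (m k : ℕ) :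
    (S R m).eval z * y (k + m) = ∑ s ∈ range (m + 1), y (k + 2 * s) := by
  induction m using Nat.twoStepInduction generalizing k with
  | zero => simp
  | one => simp [sum_range_succ, hy, add_comm]
  | more m ih₀ ih₁ =>
    have hz : z * ∑ s ∈ range (m + 2), y (k + 1 + 2 * s)
        = ∑ s ∈ range (m + 2), y (k + 2 + 2 * s) + ∑ s ∈ range (m + 2), y (k + 2 * s) := by
      rw [mul_sum, ← sum_add_distrib]
      exact sum_congr rfl fun s _ => by convert hy (k + 2 * s) using 3 <;> ring
    calc (S R (m + 2 : ℕ)).eval z * y (k + (m + 2))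
        = z * ((S R (m + 1 : ℕ)).eval z * y (k + 1 + (m + 1)))
          - (S R m).eval z * y (k + 2 + m) := by
          rw [S_eval_natCast_add_two]; ring_nf
      _ = ∑ s ∈ range (m + 3), y (k + 2 * s) := by
          rw [ih₁, ih₀, hz, sum_range_succ _ (m + 1), sum_range_succ _ (m + 2),
            show k + 2 + 2 * (m + 1) = k + 2 * (m + 2) by ring]
          abel

end Polynomial.Chebyshev

/-- Cayley–Hamilton for the transfer matrix `[[p, -1], [1, 0]] [[q, -1], [1, 0]] [[r, -1], [1, 0]]`. -/
theorem continuant_period_three (p q r : R) {y₀ y₁ y₂ y₃ y₄ y₅ y₆ : R}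
    (h₁ : p * y₁ = y₂ + y₀) (h₂ : q * y₂ = y₃ + y₁) (h₃ : r * y₃ = y₄ + y₂)
    (h₄ : p * y₄ = y₅ + y₃) (h₅ : q * y₅ = y₆ + y₄) :
    (p * q * r - p - q - r) * y₃ = y₆ + y₀ := by
  linear_combination (p * q - 1) * h₃ + q * h₄ + p * h₂ + h₅ + h₁

/-- Equal to `x i 3 - x (i + 1) 1` for every `i` in a tube system, so it models `X_δ`. -/
def tubeDelta (x : ZMod 3 → ℕ → R) : R :=
  x 0 1 * x 1 1 * x 2 1 - x 0 1 - x 1 1 - x 2 1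

theorem tubeDelta_eq (x : ZMod 3 → ℕ → R) (j : ZMod 3) :
    tubeDelta x = x j 1 * x (j + 1) 1 * x (j + 2) 1 - x j 1 - x (j + 1) 1 - x (j + 2) 1 := by
  obtain rfl | rfl | rfl : j = 0 ∨ j = 1 ∨ j = 2 := by decide +revert
  · rfl
  all_goals unfold tubeDelta; reduce_mod_char; ring

namespace IsTubeSystem

section AnyRank

variable {r : ℕ} {x : ZMod r → ℕ → R} (hx : IsTubeSystem r x)
include hx

theorem mul_succ_eq {i j : ZMod r} {N : ℕ} (hj : i + ((N + 1 : ℕ) : ZMod r) = j) :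
    x j 1 * x i (N + 1) = x i (N + 2) + x i N :=
  hj ▸ hx.2.1 i (N + 1) N.succ_pos

theorem pred_mul_succ_eq {h i j : ZMod r} {N : ℕ} (hh : h = i - 1) (hj : j = i + 1) :
    x h 1 * x i (N + 1) = x h (N + 2) + x j N := by
  subst hh hj
  exact hx.2.2 i (N + 1) N.succ_pos

end AnyRank

variable {x : ZMod 3 → ℕ → R} (hx : IsTubeSystem 3 x)
include hx

theorem tubeDelta_mul_add_three (i : ZMod 3) (K : ℕ) :
    tubeDelta x * x i (K + 3) = x i (K + 6) + x i K := by
  rw [tubeDelta_eq x (i + (K + 1 : ℕ))]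
  exact continuant_period_three _ _ _ (hx.mul_succ_eq rfl) (hx.mul_succ_eq (by grind))
    (hx.mul_succ_eq (by grind)) (hx.mul_succ_eq (by grind)) (hx.mul_succ_eq (by grind))

/-- The case `K = -1` of `tubeDelta_mul_add_three`, reading `x i (-1)` as `0`. -/
theorem tubeDelta_mul_two (i : ZMod 3) : tubeDelta x * x i 2 = x i 5 := by
  rw [tubeDelta_eq x i, ← add_zero (x i 5)]
  exact continuant_period_three _ _ _ (by rw [hx.1, mul_one, add_zero])
    (hx.mul_succ_eq (N := 0) (by grind)) (hx.mul_succ_eq (N := 1) (by grind))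
    (hx.mul_succ_eq (N := 2) (by grind)) (hx.mul_succ_eq (N := 3) (by grind))

theorem eq_S_eval_tubeDelta_mul (i : ZMod 3) (m : ℕ) :
    x i (3 * m + 2) = (S R m).eval (tubeDelta x) * x i 2 :=
  eq_S_eval_mul_of_recurrence (u := fun m => x i (3 * m + 2)) (hx.tubeDelta_mul_two i)
    (fun k => hx.tubeDelta_mul_add_three i (3 * k + 2)) m

theorem length_two_mul_eq (i : ZMod 3) (n : ℕ) :
    x (i + 1) 2 * x i (n + 1) = x (i + 1) (n + 3) + x (i + 1) 1 * x (i + 1) n := by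
  have hA : x (i - 1) 1 * x i (n + 1) = x (i - 1) (n + 2) + x (i + 1) n :=
    hx.pred_mul_succ_eq rfl rfl
  have hB : x (i + 1) 1 * x (i - 1) (n + 2) = x (i + 1) (n + 3) + x i (n + 1) :=
    hx.pred_mul_succ_eq (by grind) (by grind)
  have hC : x (i - 1) 1 * x (i + 1) 1 = x (i + 1) 2 + x (i + 1) 0 :=
    hx.mul_succ_eq (N := 0) (by grind)
  rw [hx.1] at hC
  linear_combination x (i + 1) 1 * hA + hB - x i (n + 1) * hC

theorem mul_eq_sum (i : ZMod 3) (m n : ℕ) :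
    x (i + 1) (3 * m + 2) * x i (n + 3 * m + 1)
      = ∑ s ∈ range (m + 1), (x (i + 1) (n + 6 * s + 3) + x (i + 1) 1 * x (i + 1) (n + 6 * s)) := by
  set w : ℕ → R := fun K => x (i + 1) (K + 3) + x (i + 1) 1 * x (i + 1) K
  have hw : ∀ K, tubeDelta x * w (K + 3) = w (K + 6) + w K := by
    intro K
    have h₁ := hx.tubeDelta_mul_add_three (i + 1) (K + 3)
    have h₂ := hx.tubeDelta_mul_add_three (i + 1) K
    simp only [w, add_assoc] at h₁ h₂ ⊢
    linear_combination h₁ + x (i + 1) 1 * h₂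
  have hsum := S_eval_mul_eq_sum_of_recurrence (y := fun k => w (n + 3 * k))
    (fun k => by simpa only [mul_add, add_assoc] using hw (n + 3 * k)) m 0
  rw [hx.eq_S_eval_tubeDelta_mul, mul_assoc, hx.length_two_mul_eq]
  convert hsum using 2 <;> simp only [w] <;> ring_nf

end IsTubeSystem

end

/-- Proposition 7.2(2). -/
theorem tube_rank_three_prop_7_2_2 {R : Type*} [CommRing R]
    (x : ZMod 3 → ℕ → R) (hx : IsTubeSystem 3 x)
    (m n : ℕ) (hn : 3 * m + 2 ≤ n) :
    x 2 (3 * m + 2) * x 1 n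
      = ∑ t ∈ Finset.range (2 * m + 2),
          if Even t then x 2 (n + 3 * m + 2 - 3 * t)
          else x 2 1 * x 2 (n + 3 * m + 2 - 3 * t) := by
  obtain ⟨b, rfl⟩ : ∃ b, n = b + 3 * m + 1 := ⟨n - 3 * m - 1, by omega⟩
  rw [show (2 : ZMod 3) = 1 + 1 from rfl, hx.mul_eq_sum, ← sum_range_reflect,
    show 2 * m + 2 = 2 * (m + 1) by ring, sum_range_two_mul]
  refine sum_congr rfl fun s hs => ?_
  have hsm : s ≤ m := Nat.lt_succ_iff.mp (mem_range.mp hs)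
  rw [if_pos (even_two_mul s), if_neg s.not_even_two_mul_add_one]
  grind
end

section
/- Let x : ZMod 3 → ℕ → R be a tube system of rank 3 over a commutative ring R, and let m ≥ 0 and n ≥ 3m+1 be integers with n ≡ 1 (mod 3). Then x 2 (3m+1) · x 1 n = ∑_{t=0}^{3m+1} x 1 (n+3m+1−2t). (This is Corollary 7.3(1): for n ≡ 1 mod 3, X_{E_2[3m+1]} X_{E_1[n]} = X_{E_1[n+3m+1]} + X_{E_1[n+3m−1]} + X_{E_1[n+3m−3]} + ⋯ + X_{E_1[n−3m+1]} + X_{E_1[n−3m−1]}.) -/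
/-! Relation (ii) with `i = 2` gives `x 2 (k + 1) = x (2 + k) 1 * x 2 k - x 2 (k - 1)`, so for fixed
`n` the products `x 2 k * x 1 n` obey a three-term recurrence in `k`. Writing `n = d + k`, they are
sums over the sizes `d, d + 2, …, d + 2k`: with constant quasi-socle `1` when `k ≡ 1`, and with
quasi-socle advancing by one at each step when `k ≡ 0, 2 (mod 3)`. The recurrence then amounts to
three identities for the product of such a sum with some `x j 1`. Each is proved by induction on the
length, three terms at a time, expanding every product by (ii) or (iii) and trading a pair
`x i (N + 1) + x i (N - 1)` for the other expansion when `N ≡ 2`, where both relations apply. -/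

section

variable {R : Type*} [CommRing R] {r : ℕ}

namespace IsTubeSystem

variable {x : ZMod r → ℕ → R}

theorem mul_top (hx : IsTubeSystem r x) {i j : ZMod r} {N a b : ℕ} (k : ℕ)
    (hN : 1 ≤ N := by omega) (hk : N % r = k := by omega) (hj : i + k = j := by decide)
    (ha : a = N + 1 := by omega) (hb : b = N - 1 := by omega) :
    x j 1 * x i N = x i a + x i b := by
  subst hk hj ha hb
  rw [ZMod.natCast_mod]
  exact hx.2.1 i N hN

theorem mul_socle (hx : IsTubeSystem r x) {i j i' : ZMod r} {N a b : ℕ}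
    (hN : 1 ≤ N := by omega) (hj : i - 1 = j := by decide) (hi' : i + 1 = i' := by decide)
    (ha : a = N + 1 := by omega) (hb : b = N - 1 := by omega) :
    x j 1 * x i N = x j a + x i' b := by
  subst hj hi' ha hb
  exact hx.2.2 i N hN

theorem exchange (hx : IsTubeSystem r x) {i j i' : ZMod r} (N : ℕ) {a b : ℕ} (k : ℕ)
    (hN : 1 ≤ N := by omega) (hk : N % r = k := by omega) (hj : i + k = j := by decide)
    (hj' : i - 1 = j := by decide) (hi' : i + 1 = i' := by decide)
    (ha : a = N + 1 := by omega) (hb : b = N - 1 := by omega) :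
    x i a + x i b = x j a + x i' b := by
  rw [← hx.mul_top k hN hk hj ha hb, hx.mul_socle hN hj' hi' ha hb]

end IsTubeSystem

def flatSum (x : ZMod r → ℕ → R) (i : ZMod r) (b l : ℕ) : R :=
  ∑ s ∈ Finset.range (l + 1), x i (b + 2 * s)

def twistSum (x : ZMod r → ℕ → R) (c : ZMod r) (b l : ℕ) : R :=
  ∑ s ∈ Finset.range (l + 1), x (c + s) (b + 2 * s)

section

variable (x : ZMod r → ℕ → R)

theorem flatSum_add_three (i : ZMod r) (b l : ℕ) :
    flatSum x i b (l + 3) = flatSum x i b l + x i (b + 2 * l + 2) + x i (b + 2 * l + 4)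
      + x i (b + 2 * l + 6) := by
  simp only [flatSum, Finset.sum_range_succ]
  ring_nf

theorem twistSum_add_three (c : ZMod r) (b l : ℕ) :
    twistSum x c b (l + 3) = twistSum x c b l + x (c + (l + 1 : ℕ)) (b + 2 * l + 2)
      + x (c + (l + 2 : ℕ)) (b + 2 * l + 4) + x (c + (l + 3 : ℕ)) (b + 2 * l + 6) := by
  simp only [twistSum, Finset.sum_range_succ]
  ring_nf

end

namespace IsTubeSystem

variable {x : ZMod 3 → ℕ → R} (hx : IsTubeSystem 3 x)
include hx

theorem mul_flatSum {d : ℕ} (hd : d % 3 = 2) (m : ℕ) :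
    x 0 1 * flatSum x 1 (d + 1) (3 * m + 1)
      = twistSum x 2 d (3 * m + 2) + twistSum x 1 (d + 2) (3 * m) := by
  induction m with
  | zero =>
    have h₁ : x 0 1 * x 1 (d + 1) = x 0 (d + 2) + x 2 d := hx.mul_socle
    have h₂ : x 0 1 * x 1 (d + 3) = x 1 (d + 4) + x 1 (d + 2) := hx.mul_top 2
    simp only [flatSum, twistSum, Finset.sum_range_succ]
    push_cast; reduce_mod_char
    linear_combination (norm := ring_nf) h₁ + h₂
  | succ m ih =>
    have h₁ : x 0 1 * x 1 (d + 6 * m + 5) = x 0 (d + 6 * m + 6) + x 2 (d + 6 * m + 4) :=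
      hx.mul_socle
    have h₂ : x 0 1 * x 1 (d + 6 * m + 7) = x 0 (d + 6 * m + 8) + x 2 (d + 6 * m + 6) :=
      hx.mul_socle
    have h₃ : x 0 1 * x 1 (d + 6 * m + 9) = x 1 (d + 6 * m + 10) + x 1 (d + 6 * m + 8) :=
      hx.mul_top 2
    rw [show 3 * (m + 1) + 1 = 3 * m + 1 + 3 by ring, show 3 * (m + 1) + 2 = 3 * m + 2 + 3 by ring,
      show 3 * (m + 1) = 3 * m + 3 by ring, flatSum_add_three, twistSum_add_three x 2,
      twistSum_add_three x 1]
    push_cast; reduce_mod_char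
    linear_combination (norm := ring_nf) ih + h₁ + h₂ + h₃

theorem mul_twistSum_two {d : ℕ} (hd : d % 3 = 1) (m : ℕ) :
    x 1 1 * twistSum x 2 (d + 1) (3 * m + 2)
      = twistSum x 1 d (3 * m + 3) + flatSum x 1 (d + 2) (3 * m + 1) := by
  induction m with
  | zero =>
    have h₁ : x 1 1 * x 2 (d + 1) = x 1 (d + 2) + x 0 d := hx.mul_socle
    have h₂ : x 1 1 * x 0 (d + 3) = x 0 (d + 4) + x 0 (d + 2) := hx.mul_top 1
    have h₃ : x 1 1 * x 1 (d + 5) = x 1 (d + 6) + x 1 (d + 4) := hx.mul_top 0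
    have e : x 0 (d + 2) + x 0 d = x 2 (d + 2) + x 1 d := hx.exchange (d + 1) 2
    simp only [flatSum, twistSum, Finset.sum_range_succ]
    push_cast; reduce_mod_char
    linear_combination (norm := ring_nf) h₁ + h₂ + h₃ + e
  | succ m ih =>
    have h₁ : x 1 1 * x 2 (d + 6 * m + 7) = x 1 (d + 6 * m + 8) + x 0 (d + 6 * m + 6) :=
      hx.mul_socle
    have h₂ : x 1 1 * x 0 (d + 6 * m + 9) = x 0 (d + 6 * m + 10) + x 0 (d + 6 * m + 8) :=
      hx.mul_top 1
    have h₃ : x 1 1 * x 1 (d + 6 * m + 11) = x 1 (d + 6 * m + 12) + x 1 (d + 6 * m + 10) :=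
      hx.mul_top 0
    have e : x 0 (d + 6 * m + 8) + x 0 (d + 6 * m + 6)
        = x 2 (d + 6 * m + 8) + x 1 (d + 6 * m + 6) := hx.exchange (d + 6 * m + 7) 2
    rw [show 3 * (m + 1) + 2 = 3 * m + 2 + 3 by ring, show 3 * (m + 1) + 3 = 3 * m + 3 + 3 by ring,
      show 3 * (m + 1) + 1 = 3 * m + 1 + 3 by ring, flatSum_add_three, twistSum_add_three x 2,
      twistSum_add_three x 1]
    push_cast; reduce_mod_char
    linear_combination (norm := ring_nf) ih + h₁ + h₂ + h₃ + e

theorem mul_twistSum_one {d : ℕ} (hd : d % 3 = 0) (m : ℕ) :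
    x 2 1 * twistSum x 1 (d + 1) (3 * m + 3)
      = flatSum x 1 d (3 * m + 4) + twistSum x 2 (d + 2) (3 * m + 2) := by
  induction m with
  | zero =>
    have h₁ : x 2 1 * x 1 (d + 1) = x 1 (d + 2) + x 1 d := hx.mul_top 1
    have h₂ : x 2 1 * x 2 (d + 3) = x 2 (d + 4) + x 2 (d + 2) := hx.mul_top 0
    have h₃ : x 2 1 * x 0 (d + 5) = x 0 (d + 6) + x 0 (d + 4) := hx.mul_top 2
    have h₄ : x 2 1 * x 1 (d + 7) = x 1 (d + 8) + x 1 (d + 6) := hx.mul_top 1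
    have e : x 1 (d + 6) + x 1 (d + 4) = x 0 (d + 6) + x 2 (d + 4) := hx.exchange (d + 5) 2
    simp only [flatSum, twistSum, Finset.sum_range_succ]
    push_cast; reduce_mod_char
    linear_combination (norm := ring_nf) h₁ + h₂ + h₃ + h₄ - e
  | succ m ih =>
    have h₁ : x 2 1 * x 2 (d + 6 * m + 9) = x 2 (d + 6 * m + 10) + x 2 (d + 6 * m + 8) :=
      hx.mul_top 0
    have h₂ : x 2 1 * x 0 (d + 6 * m + 11) = x 0 (d + 6 * m + 12) + x 0 (d + 6 * m + 10) :=
      hx.mul_top 2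
    have h₃ : x 2 1 * x 1 (d + 6 * m + 13) = x 1 (d + 6 * m + 14) + x 1 (d + 6 * m + 12) :=
      hx.mul_top 1
    have e : x 1 (d + 6 * m + 12) + x 1 (d + 6 * m + 10)
        = x 0 (d + 6 * m + 12) + x 2 (d + 6 * m + 10) := hx.exchange (d + 6 * m + 11) 2
    rw [show 3 * (m + 1) + 3 = 3 * m + 3 + 3 by ring, show 3 * (m + 1) + 4 = 3 * m + 4 + 3 by ring,
      show 3 * (m + 1) + 2 = 3 * m + 2 + 3 by ring, flatSum_add_three, twistSum_add_three x 1,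
      twistSum_add_three x 2]
    push_cast; reduce_mod_char
    linear_combination (norm := ring_nf) ih + h₁ + h₂ + h₃ - e

theorem mul_eq_twistSum_and_flatSum (m d : ℕ) (hd : d % 3 = 0) :
    x 2 (3 * m) * x 1 (d + 3 * m + 1) = twistSum x 1 (d + 1) (3 * m) ∧
      x 2 (3 * m + 1) * x 1 (d + 3 * m + 1) = flatSum x 1 d (3 * m + 1) := by
  induction m generalizing d with
  | zero =>
    have h : x 2 1 * x 1 (d + 1) = x 1 (d + 2) + x 1 d := hx.mul_top 1
    simp only [flatSum, twistSum, Finset.sum_range_succ, hx.1]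
    constructor
    · ring_nf
    · linear_combination (norm := ring_nf) h
  | succ m ih =>
    obtain ⟨h₀, h₁⟩ := ih (d + 3) (by omega)
    set n := d + 3 * (m + 1) + 1
    have hn : d + 3 + 3 * m + 1 = n := by ring
    rw [hn] at h₀ h₁
    have r₂ : x 0 1 * x 2 (3 * m + 1) = x 2 (3 * m + 2) + x 2 (3 * m) := hx.mul_top 1
    have r₃ : x 1 1 * x 2 (3 * m + 2) = x 2 (3 * m + 3) + x 2 (3 * m + 1) := hx.mul_top 2
    have r₄ : x 2 1 * x 2 (3 * m + 3) = x 2 (3 * m + 4) + x 2 (3 * m + 2) := hx.mul_top 0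
    have h₂ : x 2 (3 * m + 2) * x 1 n = twistSum x 2 (d + 2) (3 * m + 2) := by
      linear_combination (norm := ring_nf)
        -x 1 n * r₂ + x 0 1 * h₁ + hx.mul_flatSum (d := d + 2) (by omega) m - h₀
    have h₃ : x 2 (3 * m + 3) * x 1 n = twistSum x 1 (d + 1) (3 * m + 3) := by
      linear_combination (norm := ring_nf)
        -x 1 n * r₃ + x 1 1 * h₂ + hx.mul_twistSum_two (d := d + 1) (by omega) m - h₁
    have h₄ : x 2 (3 * m + 4) * x 1 n = flatSum x 1 d (3 * m + 4) := by
      linear_combination -x 1 n * r₄ + x 2 1 * h₃ + hx.mul_twistSum_one hd m - h₂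
    exact ⟨h₃, h₄⟩

end IsTubeSystem

end

/-- Corollary 7.3(1). -/
theorem tube_rank_three_cor_7_3_1 {R : Type*} [CommRing R]
    (x : ZMod 3 → ℕ → R) (hx : IsTubeSystem 3 x)
    (m n : ℕ) (hn : 3 * m + 1 ≤ n) (hmod : n % 3 = 1) :
    x 2 (3 * m + 1) * x 1 n
      = ∑ t ∈ Finset.range (3 * m + 2), x 1 (n + 3 * m + 1 - 2 * t) := by
  obtain ⟨d, rfl⟩ : ∃ d, n = d + 3 * m + 1 := ⟨n - (3 * m + 1), by omega⟩
  rw [(hx.mul_eq_twistSum_and_flatSum m d (by omega)).2, flatSum,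
    ← Finset.sum_range_reflect]
  refine Finset.sum_congr rfl fun t ht => ?_
  rw [Finset.mem_range] at ht
  congr 1
  omega
end

section
/- Let x : ZMod 3 → ℕ → R be a tube system of rank 3 over a commutative ring R, and let m ≥ 0 and n ≥ 3m+2 be integers with n ≡ 1 (mod 3). Then x 2 (3m+2) · x 1 n = ∑_{t=0}^{3m+2} x 2 (n+3m+2−2t). (This is Corollary 7.3(2): for n ≡ 1 mod 3, X_{E_2[3m+2]} X_{E_1[n]} = X_{E_2[n+3m+2]} + X_{E_2[n+3m]} + X_{E_2[n+3m−2]} + ⋯ + X_{E_2[n−3m]} + X_{E_2[n−3m−2]}.) -/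
/-! Relation (ii) at `i = 2` is the three-term recursion
`x (2 + (k + 1)) 1 * x 2 (k + 1) = x 2 (k + 2) + x 2 k`, so `x 2 k * x 1 n` is determined by the
two previous products. Multiplying those by `x c 1` with (iii) turns each ladder
`∑ x i (b + 1 + 2 t)` into two ladders of step 2, and one recovers a closed form that depends on
`k mod 3`: a ladder of `x 2` (`k ≡ 2`), of `x 1` (`k ≡ 1`), or `x 1 (n + k)` plus a ladder of
`x 0` (`k ≡ 0`). The three forms are proved together by induction on `k`; in the step to
`k ≡ 2` the tops of the ladders are matched by `x 0 (M + 2) + x 0 M = x 2 (M + 2) + x 1 M`,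
valid for `M ≡ 1`.
Ladders start at the bottom `b = n - k`, so that no truncated subtraction occurs. -/

open Finset

theorem ZMod.natCast_eq_of_mod_eq {n a c : ℕ} (h : a % n = c) : (a : ZMod n) = c := by
  rw [← ZMod.natCast_mod, h]

namespace IsTubeSystem

variable {R : Type*} [CommRing R] {r : ℕ} {x : ZMod r → ℕ → R}

theorem mul_succ_of_add_eq (hx : IsTubeSystem r x) {i j : ZMod r} {N : ℕ}
    (h : i + ((N + 1 : ℕ) : ZMod r) = j) :
    x j 1 * x i (N + 1) = x i (N + 2) + x i N := by
  simpa [← h] using hx.2.1 i (N + 1) N.succ_pos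

theorem mul_succ_of_succ_eq (hx : IsTubeSystem r x) {i j l : ZMod r} (hj : j + 1 = i)
    (hl : i + 1 = l) (N : ℕ) :
    x j 1 * x i (N + 1) = x j (N + 2) + x l N := by
  simpa [← hj, ← hl, add_assoc] using hx.2.2 (j + 1) (N + 1) N.succ_pos

theorem mul_sum_of_succ_eq (hx : IsTubeSystem r x) {i j l : ZMod r} (hj : j + 1 = i)
    (hl : i + 1 = l) (b c : ℕ) :
    x j 1 * ∑ t ∈ range c, x i (b + 1 + 2 * t)
      = ∑ t ∈ range c, x j (b + 2 + 2 * t) + ∑ t ∈ range c, x l (b + 2 * t) := by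
  rw [mul_sum, ← sum_add_distrib]
  refine sum_congr rfl fun t _ => ?_
  rw [show b + 1 + 2 * t = b + 2 * t + 1 by ring, show b + 2 + 2 * t = b + 2 * t + 2 by ring]
  exact hx.mul_succ_of_succ_eq hj hl _

/-- Both sides equal `x j 1 * x i (N + 1)`, by (ii) and by (iii) respectively. -/
theorem add_eq_add_of_natCast_eq_zero (hx : IsTubeSystem r x) {i j l : ZMod r}
    (hj : j + 1 = i) (hl : i + 1 = l) {N : ℕ} (hN : ((N + 2 : ℕ) : ZMod r) = 0) :
    x i (N + 2) + x i N = x j (N + 2) + x l N := by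
  have hij : i + ((N + 1 : ℕ) : ZMod r) = j := by
    have hN' : ((N + 1 : ℕ) : ZMod r) = -1 := by
      push_cast at hN ⊢
      linear_combination hN
    rw [hN', ← hj]
    ring
  rw [← hx.mul_succ_of_add_eq hij, hx.mul_succ_of_succ_eq hj hl]

section RankThree

variable {x : ZMod 3 → ℕ → R} (hx : IsTubeSystem 3 x) {k b n : ℕ}
include hx

theorem mul_add_two_eq_sum_two (hk : k % 3 = 0) (hbn : b + (k + 2) = n)
    (hn : n % 3 = 1) (h₁ : x 2 (k + 1) * x 1 n = ∑ t ∈ range (k + 2), x 1 (b + 1 + 2 * t))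
    (h₀ : x 2 k * x 1 n = x 1 (n + k) + ∑ t ∈ range k, x 0 (b + 2 + 2 * t)) :
    x 2 (k + 2) * x 1 n = ∑ t ∈ range (k + 3), x 2 (b + 2 * t) := by
  have hrec : x 0 1 * x 2 (k + 1) = x 2 (k + 2) + x 2 k :=
    hx.mul_succ_of_add_eq (by rw [ZMod.natCast_eq_of_mod_eq (c := 1) (by omega)]; decide)
  have hmul := hx.mul_sum_of_succ_eq (i := 1) (j := 0) (l := 2) (by decide) (by decide) b (k + 2)
  have hcorner : x 0 (n + k + 2) + x 0 (n + k) = x 2 (n + k + 2) + x 1 (n + k) :=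
    hx.add_eq_add_of_natCast_eq_zero (by decide) (by decide)
      (by rw [ZMod.natCast_eq_of_mod_eq (c := 0) (by omega)]; rfl)
  have hlow : ∑ t ∈ range (k + 2), x 0 (b + 2 + 2 * t)
      = ∑ t ∈ range k, x 0 (b + 2 + 2 * t) + x 0 (n + k) + x 0 (n + k + 2) := by
    rw [sum_range_succ, sum_range_succ, show b + 2 + 2 * k = n + k by omega,
      show b + 2 + 2 * (k + 1) = n + k + 2 by omega]
  rw [sum_range_succ, show b + 2 * (k + 2) = n + k + 2 by omega]
  linear_combination -x 1 n * hrec + x 0 1 * h₁ - h₀ + hmul + hlow + hcorner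

theorem mul_add_two_eq_add_sum_zero (hk : k % 3 = 1) (hbn : b + (k + 2) = n)
    (h₁ : x 2 (k + 1) * x 1 n = ∑ t ∈ range (k + 2), x 2 (b + 1 + 2 * t))
    (h₀ : x 2 k * x 1 n = ∑ t ∈ range (k + 1), x 1 (b + 2 + 2 * t)) :
    x 2 (k + 2) * x 1 n = x 1 (n + (k + 2)) + ∑ t ∈ range (k + 2), x 0 (b + 2 * t) := by
  have hrec : x 1 1 * x 2 (k + 1) = x 2 (k + 2) + x 2 k :=
    hx.mul_succ_of_add_eq (by rw [ZMod.natCast_eq_of_mod_eq (c := 2) (by omega)]; decide)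
  have hmul := hx.mul_sum_of_succ_eq (i := 2) (j := 1) (l := 0) (by decide) (by decide) b (k + 2)
  rw [sum_range_succ (fun t => x 1 (b + 2 + 2 * t)),
    show b + 2 + 2 * (k + 1) = n + (k + 2) by omega] at hmul
  linear_combination -x 1 n * hrec + x 1 1 * h₁ - h₀ + hmul

theorem mul_add_two_eq_sum_one (hk : k % 3 = 2) (hbn : b + (k + 2) = n)
    (hn : n % 3 = 1)
    (h₁ : x 2 (k + 1) * x 1 n = x 1 (n + (k + 1)) + ∑ t ∈ range (k + 1), x 0 (b + 1 + 2 * t))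
    (h₀ : x 2 k * x 1 n = ∑ t ∈ range (k + 1), x 2 (b + 2 + 2 * t)) :
    x 2 (k + 2) * x 1 n = ∑ t ∈ range (k + 3), x 1 (b + 2 * t) := by
  have hrec : x 2 1 * x 2 (k + 1) = x 2 (k + 2) + x 2 k :=
    hx.mul_succ_of_add_eq (by rw [ZMod.natCast_eq_of_mod_eq (c := 0) (by omega)]; decide)
  have hmul := hx.mul_sum_of_succ_eq (i := 0) (j := 2) (l := 1) (by decide) (by decide) b (k + 1)
  have htop : x 2 1 * x 1 (n + k + 1) = x 1 (n + k + 2) + x 1 (n + k) :=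
    hx.mul_succ_of_add_eq (by rw [ZMod.natCast_eq_of_mod_eq (c := 1) (by omega)]; decide)
  rw [sum_range_succ, sum_range_succ, show b + 2 * (k + 1) = n + k by omega,
    show b + 2 * (k + 2) = n + k + 2 by omega]
  linear_combination -x 1 n * hrec + x 2 1 * h₁ - h₀ + hmul + htop

theorem mul_eq_sum_of_mod_three (m : ℕ) :
    (∀ b n, b + 3 * m = n → n % 3 = 1 →
      x 2 (3 * m) * x 1 n = x 1 (n + 3 * m) + ∑ t ∈ range (3 * m), x 0 (b + 2 * t)) ∧
    (∀ b n, b + (3 * m + 1) = n → n % 3 = 1 →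
      x 2 (3 * m + 1) * x 1 n = ∑ t ∈ range (3 * m + 2), x 1 (b + 2 * t)) ∧
    (∀ b n, b + (3 * m + 2) = n → n % 3 = 1 →
      x 2 (3 * m + 2) * x 1 n = ∑ t ∈ range (3 * m + 3), x 2 (b + 2 * t)) := by
  induction m with
  | zero =>
    have h₀ : ∀ b n, b + 0 = n → n % 3 = 1 →
        x 2 0 * x 1 n = x 1 (n + 0) + ∑ t ∈ range 0, x 0 (b + 2 * t) := by
      simp [hx.1]
    have h₁ : ∀ b n, b + 1 = n → n % 3 = 1 →
        x 2 1 * x 1 n = ∑ t ∈ range 2, x 1 (b + 2 * t) := by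
      rintro b _ rfl hn
      rw [sum_range_succ, sum_range_one]
      linear_combination hx.mul_succ_of_add_eq (i := 1) (j := 2) (N := b)
        (by rw [ZMod.natCast_eq_of_mod_eq (c := 1) hn]; decide)
    refine ⟨h₀, h₁, fun b n hbn hn => ?_⟩
    exact mul_add_two_eq_sum_two hx rfl hbn hn (h₁ (b + 1) n (by omega) hn)
      (h₀ (b + 2) n (by omega) hn)
  | succ m ih =>
    obtain ⟨-, h₁, h₂⟩ := ih
    have h₃ : ∀ b n, b + (3 * m + 3) = n → n % 3 = 1 →
        x 2 (3 * m + 3) * x 1 n = x 1 (n + (3 * m + 3))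
          + ∑ t ∈ range (3 * m + 3), x 0 (b + 2 * t) := fun b n hbn hn =>
      mul_add_two_eq_add_sum_zero hx (by omega) hbn (h₂ (b + 1) n (by omega) hn)
        (h₁ (b + 2) n (by omega) hn)
    have h₄ : ∀ b n, b + (3 * m + 4) = n → n % 3 = 1 →
        x 2 (3 * m + 4) * x 1 n = ∑ t ∈ range (3 * m + 5), x 1 (b + 2 * t) :=
      fun b n hbn hn => mul_add_two_eq_sum_one hx (by omega) hbn hn
        (h₃ (b + 1) n (by omega) hn) (h₂ (b + 2) n (by omega) hn)
    refine ⟨h₃, h₄, fun b n hbn hn => ?_⟩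
    exact mul_add_two_eq_sum_two hx (by omega) hbn hn (h₄ (b + 1) n (by omega) hn)
      (h₃ (b + 2) n (by omega) hn)

end RankThree

end IsTubeSystem

/-- Corollary 7.3(2). -/
theorem tube_rank_three_cor_7_3_2 {R : Type*} [CommRing R]
    (x : ZMod 3 → ℕ → R) (hx : IsTubeSystem 3 x)
    (m n : ℕ) (hn : 3 * m + 2 ≤ n) (hmod : n % 3 = 1) :
    x 2 (3 * m + 2) * x 1 n
      = ∑ t ∈ Finset.range (3 * m + 3), x 2 (n + 3 * m + 2 - 2 * t) := by
  obtain ⟨b, rfl⟩ : ∃ b, n = b + (3 * m + 2) := ⟨n - (3 * m + 2), by omega⟩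
  rw [(hx.mul_eq_sum_of_mod_three m).2.2 b _ rfl hmod, ← sum_range_reflect]
  refine sum_congr rfl fun t ht => ?_
  rw [mem_range] at ht
  congr 1
  omega
end

section
/- Let x : ZMod 3 → ℕ → R be a tube system of rank 3 over a commutative ring R, and let m ≥ 0 and n ≥ 3m+2 be integers. Then x 1 (3m+2) · x 1 n = x 1 2 · ( ∑_{s=0}^{m} x 1 (n+3m−6s) ). (This is Proposition 7.4(2): X_{E_1[3m+2]} X_{E_1[n]} = X_{E_1[2]} ( X_{E_1[n+3m]} + X_{E_1[n+3m−6]} + ⋯ + X_{E_1[n−3m]} ).) -/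
section NegContinuant

variable {R : Type*} [CommRing R] (a : ℕ → R)

/-- `negContinuant a (k + 2)` is the determinant of the tridiagonal `k × k` matrix with diagonal
`a 1, …, a k` and off-diagonal entries `1`; the values at `0` and `1` extend the recurrence
backwards. -/
def negContinuant : ℕ → R
  | 0 => -1
  | 1 => 0
  | k + 2 => a k * negContinuant (k + 1) - negContinuant k

/-- The trace of the transfer matrix over one period of a `3`-periodic sequence. -/
def periodTrace : R := a 0 * a 1 * a 2 - a 0 - a 1 - a 2

variable {a}

theorem periodTrace_eq_of_periodic (ha : ∀ k, a (k + 3) = a k) (k : ℕ) :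
    a k * a (k + 1) * a (k + 2) - a k - a (k + 1) - a (k + 2) = periodTrace a := by
  induction k with
  | zero => rfl
  | succ k ih =>
    rw [show k + 1 + 2 = k + 3 from rfl, ha]
    linear_combination ih

theorem negContinuant_add_six (ha : ∀ k, a (k + 3) = a k) (k : ℕ) :
    negContinuant a (k + 6)
      = periodTrace a * negContinuant a (k + 3) - negContinuant a k := by
  simp only [negContinuant, ← periodTrace_eq_of_periodic ha k, ha]
  ring

theorem negContinuant_casoratian (ha : ∀ k, a (k + 3) = a k) (t j : ℕ) :
    negContinuant a (3 * t + 4) * negContinuant a (j + 3 * t)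
      = negContinuant a (3 * t + 1) * negContinuant a (j + 3 * t + 3)
        + negContinuant a 4 * negContinuant a j := by
  induction t with
  | zero => simp [negContinuant]
  | succ t ih =>
    have h₁ := negContinuant_add_six ha (3 * t + 1)
    have h₂ := negContinuant_add_six ha (j + 3 * t)
    rw [show 3 * (t + 1) + 4 = 3 * t + 1 + 6 by ring, show 3 * (t + 1) + 1 = 3 * t + 1 + 3 by ring,
      show j + 3 * (t + 1) + 3 = j + 3 * t + 6 by ring, show j + 3 * (t + 1) = j + 3 * t + 3 by ring,
      h₁, h₂]
    linear_combination ih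

theorem negContinuant_mul_eq_sum (ha : ∀ k, a (k + 3) = a k) (m j : ℕ) :
    negContinuant a (3 * m + 4) * negContinuant a (j + 3 * m + 4)
      = negContinuant a 4 * ∑ s ∈ Finset.range (m + 1), negContinuant a (j + 6 * s + 4) := by
  induction m generalizing j with
  | zero => simp
  | succ m ih =>
    have hcas := negContinuant_casoratian ha (m + 1) (j + 4)
    have hih := ih (j + 6)
    rw [show 3 * (m + 1) + 1 = 3 * m + 4 by ring, show j + 4 + 3 * (m + 1) + 3 = j + 6 + 3 * m + 4 by ring,
      show j + 4 + 3 * (m + 1) = j + 3 * (m + 1) + 4 by ring] at hcas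
    rw [Finset.sum_range_succ', hcas, hih]
    simp only [show ∀ s, j + 6 + 6 * s + 4 = j + 6 * (s + 1) + 4 from fun s => by ring]
    ring

end NegContinuant

theorem IsTubeSystem.eq_negContinuant {R : Type*} [CommRing R] {x : ZMod 3 → ℕ → R}
    (hx : IsTubeSystem 3 x) (k : ℕ) :
    x 1 k = negContinuant (fun i : ℕ => x i 1) (k + 2) := by
  induction k using Nat.twoStepInduction with
  | zero => simp [negContinuant, hx.1]
  | one => simp [negContinuant]
  | more k ih₁ ih₂ =>
    have hrec := hx.2.1 1 (k + 1) le_add_self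
    rw [Nat.add_sub_cancel, show (1 : ZMod 3) + (k + 1 : ℕ) = (k + 2 : ℕ) by push_cast; ring] at hrec
    rw [negContinuant, ← ih₂, ← ih₁]
    linear_combination -hrec

/-- Proposition 7.4(2). -/
theorem tube_rank_three_prop_7_4_2 {R : Type*} [CommRing R]
    (x : ZMod 3 → ℕ → R) (hx : IsTubeSystem 3 x)
    (m n : ℕ) (hn : 3 * m + 2 ≤ n) :
    x 1 (3 * m + 2) * x 1 n
      = x 1 2 * ∑ s ∈ Finset.range (m + 1), x 1 (n + 3 * m - 6 * s) := by
  obtain ⟨j, rfl⟩ := Nat.exists_eq_add_of_le' hn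
  have hsum : ∑ s ∈ Finset.range (m + 1), x 1 (j + (3 * m + 2) + 3 * m - 6 * s)
      = ∑ s ∈ Finset.range (m + 1), x 1 (j + 6 * s + 2) := by
    rw [← Finset.sum_range_reflect]
    exact Finset.sum_congr rfl fun s hs => by
      rw [Finset.mem_range] at hs
      congr 1
      omega
  rw [hsum]
  simp only [hx.eq_negContinuant]
  refine negContinuant_mul_eq_sum (fun k => ?_) m j
  rw [Nat.cast_add, ZMod.natCast_self, add_zero]
end
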